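/- arXiv:math/0610152 — 2 statements merged into one kernel-verified Lean document; each statement's English description precedes it below -/
import Mathlib

section
/- Consider a quasi-exact structure Λ = a·∂₁(pq)·∂₂∧∂₃ + a·∂₂(pq)·∂₃∧∂₁ + b·∂₃(pq)·∂₁∧∂₂, where p = p(x,y) depends only on x,y, q = q(z) depends only on z, and b/a = β/α ∈ ℚ*₊ in lowest terms. Then p^α · q^β is a Casimir function of Λ. -/
/-!
The bivector has components `(a q ∂ₓp, a q ∂ᵧp, b p q')`, while the gradient of `p^α q^β` is a
multiple of `(α q ∂ₓp, α q ∂ᵧp, β p q')`. Because `bα = aβ` these two vectors are parallel, so the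
bracket `{p^α q^β, f}`, a triple product of them with `∇f`, vanishes.
-/

open MvPolynomial

/-- The Poisson bracket `{f,g} = Λ(df,dg)` of the bivector on ℝ³ with components
`A23 = Λ²³`, `A31 = Λ³¹`, `A12 = Λ¹²` (coordinates `x = X 0`, `y = X 1`, `z = X 2`). -/
noncomputable def pbr (A23 A31 A12 f g : MvPolynomial (Fin 3) ℝ) : MvPolynomial (Fin 3) ℝ :=
  A23 * (pderiv 1 f * pderiv 2 g - pderiv 2 f * pderiv 1 g)
  + A31 * (pderiv 2 f * pderiv 0 g - pderiv 0 f * pderiv 2 g)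
  + A12 * (pderiv 0 f * pderiv 1 g - pderiv 1 f * pderiv 0 g)

/-- The factor `p` removes the truncated exponent `n - 1` of `pderiv_pow`, so this holds for all `n`. -/
theorem mul_pderiv_pow {σ R : Type*} [CommSemiring R] (i : σ) (p : MvPolynomial σ R) (n : ℕ) :
    p * pderiv i (p ^ n) = n * p ^ n * pderiv i p := by
  cases n with
  | zero => simp
  | succ n => rw [pderiv_pow, Nat.add_sub_cancel, pow_succ]; ring

theorem pderiv_pow_eq_zero {σ R : Type*} [CommSemiring R] {i : σ} {p : MvPolynomial σ R}
    (hp : pderiv i p = 0) (n : ℕ) : pderiv i (p ^ n) = 0 := by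
  rw [pderiv_pow, hp, mul_zero]

/-- `pbr A23 A31 A12 g f` is the triple product `∇f · (A × ∇g)`, and the hypotheses say that
`A × ∇g = 0`. -/
theorem pbr_eq_zero_of_cross_eq_zero {A23 A31 A12 g : MvPolynomial (Fin 3) ℝ}
    (h₀ : A31 * pderiv 2 g = A12 * pderiv 1 g) (h₁ : A12 * pderiv 0 g = A23 * pderiv 2 g)
    (h₂ : A23 * pderiv 1 g = A31 * pderiv 0 g) (f : MvPolynomial (Fin 3) ℝ) :
    pbr A23 A31 A12 g f = 0 := by
  unfold pbr
  linear_combination pderiv 0 f * h₀ + pderiv 1 f * h₁ + pderiv 2 f * h₂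

theorem stmt7_general (a b : ℝ)
    (p q : MvPolynomial (Fin 3) ℝ)
    (hp : pderiv 2 p = 0) (hq0 : pderiv 0 q = 0) (hq1 : pderiv 1 q = 0)
    (α β : ℕ)
    (hratio : b * (α : ℝ) = a * (β : ℝ)) :
    ∀ f : MvPolynomial (Fin 3) ℝ,
      pbr (C a * pderiv 0 (p * q)) (C a * pderiv 1 (p * q)) (C b * pderiv 2 (p * q))
        (p ^ α * q ^ β) f = 0 := by
  have hab : C b * (α : MvPolynomial (Fin 3) ℝ) = C a * (β : MvPolynomial (Fin 3) ℝ) := by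
    rw [← map_natCast C α, ← map_natCast C β, ← map_mul, ← map_mul, hratio]
  have hpα (i : Fin 3) := mul_pderiv_pow i p α
  have hqβ := mul_pderiv_pow 2 q β
  apply pbr_eq_zero_of_cross_eq_zero <;>
    simp only [pderiv_mul, hp, hq0, hq1, pderiv_pow_eq_zero hp, pderiv_pow_eq_zero hq0,
      pderiv_pow_eq_zero hq1, mul_zero, zero_mul, add_zero, zero_add]
  · linear_combination C a * pderiv 1 p * p ^ α * hqβ - C b * pderiv 2 q * q ^ β * hpα 1
      - pderiv 1 p * pderiv 2 q * p ^ α * q ^ β * hab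
  · linear_combination C b * pderiv 2 q * q ^ β * hpα 0 - C a * pderiv 0 p * p ^ α * hqβ
      + pderiv 0 p * pderiv 2 q * p ^ α * q ^ β * hab
  · rw [pderiv_pow, pderiv_pow]
    ring

/-- Quasi-exact structure `Λ = a·∂₁(pq)·∂₂∧∂₃ + a·∂₂(pq)·∂₃∧∂₁ + b·∂₃(pq)·∂₁∧∂₂`
with `p = p(x,y)`, `q = q(z)`, and `b/a = β/α ∈ ℚ*₊` in lowest terms.
Then `p^α · q^β` is a Casimir function of Λ. -/
theorem stmt7 (a b : ℝ) (ha : a ≠ 0) (hb : b ≠ 0)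
    (p q : MvPolynomial (Fin 3) ℝ)
    (hp : pderiv 2 p = 0) (hq0 : pderiv 0 q = 0) (hq1 : pderiv 1 q = 0)
    (α β : ℕ) (hα : 0 < α) (hβ : 0 < β) (hcop : Nat.Coprime α β)
    (hratio : b * (α : ℝ) = a * (β : ℝ)) :
    ∀ f : MvPolynomial (Fin 3) ℝ,
      pbr (C a * pderiv 0 (p * q)) (C a * pderiv 1 (p * q)) (C b * pderiv 2 (p * q))
        (p ^ α * q ^ β) f = 0 :=
  stmt7_general a b p q hp hq0 hq1 α β hratio
end

section
/- The bivector Λ₈ = b(x²+y²)∂₁∧∂₂ + (2b+c)xz∂₂∧∂₃ + (2b+c)yz∂₃∧∂₁ + z²∂₁∧∂₂ on ℝ³ is a Poisson bivector for all real b, c (taking the + sign for the z² term). -/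
/-!
Write the bivector as the vector field `A = (Λ²³, Λ³¹, Λ¹²)`. Expanding the Jacobiator of its
bracket with the Leibniz rule, the second derivatives of `f, g, h` cancel by symmetry of mixed
partials, and what remains is `-(A · curl A)` times the Jacobian determinant of `(f, g, h)`.
For `Λ₈`, `curl A = (-c y, c x, 0)`, which is orthogonal to
`A = ((2b+c) x z, (2b+c) y z, b (x² + y²) + z²)`.
-/

open MvPolynomial

theorem MvPolynomial.pderiv_pderiv_comm {R σ : Type*} [CommRing R] (i j : σ)
    (f : MvPolynomial σ R) : pderiv i (pderiv j f) = pderiv j (pderiv i f) := by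
  classical
  -- `⁅∂ᵢ, ∂ⱼ⁆` is a derivation that kills every variable.
  have hcomm : ⁅pderiv i, pderiv j⁆ = (0 : Derivation R (MvPolynomial σ R) (MvPolynomial σ R)) :=
    derivation_ext fun k => by
      rw [Derivation.commutator_apply, pderiv_X, pderiv_X]
      simp only [Pi.single_apply]
      split_ifs <;> simp
  rw [← sub_eq_zero, ← Derivation.commutator_apply, hcomm, Derivation.zero_apply]

noncomputable def dotCurl (A23 A31 A12 : MvPolynomial (Fin 3) ℝ) : MvPolynomial (Fin 3) ℝ :=
  A23 * (pderiv 1 A12 - pderiv 2 A31) + A31 * (pderiv 2 A23 - pderiv 0 A12)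
    + A12 * (pderiv 0 A31 - pderiv 1 A23)

noncomputable def jacobianDet (f g h : MvPolynomial (Fin 3) ℝ) : MvPolynomial (Fin 3) ℝ :=
  (Matrix.of fun i j => pderiv j (![f, g, h] i)).det

theorem pbr_jacobiator (A23 A31 A12 f g h : MvPolynomial (Fin 3) ℝ) :
    pbr A23 A31 A12 f (pbr A23 A31 A12 g h) + pbr A23 A31 A12 g (pbr A23 A31 A12 h f)
      + pbr A23 A31 A12 h (pbr A23 A31 A12 f g)
      = -(dotCurl A23 A31 A12 * jacobianDet f g h) := by
  simp only [pbr, dotCurl, jacobianDet, Matrix.det_fin_three, Matrix.of_apply,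
    Matrix.cons_val_zero, Matrix.cons_val_one, Matrix.cons_val_two, Matrix.tail_cons,
    Matrix.head_cons, map_add, map_sub, pderiv_mul,
    pderiv_pderiv_comm (1 : Fin 3) 0, pderiv_pderiv_comm (2 : Fin 3) 0,
    pderiv_pderiv_comm (2 : Fin 3) 1]
  ring

theorem pbr_jacobi_of_dotCurl_eq_zero {A23 A31 A12 : MvPolynomial (Fin 3) ℝ}
    (hA : dotCurl A23 A31 A12 = 0) (f g h : MvPolynomial (Fin 3) ℝ) :
    pbr A23 A31 A12 f (pbr A23 A31 A12 g h) + pbr A23 A31 A12 g (pbr A23 A31 A12 h f)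
      + pbr A23 A31 A12 h (pbr A23 A31 A12 f g) = 0 := by
  rw [pbr_jacobiator, hA, zero_mul, neg_zero]

theorem dotCurl_lambda8 (b c : ℝ) :
    dotCurl (C (2*b+c) * (X 0 * X 2)) (C (2*b+c) * (X 1 * X 2))
      (C b * (X 0 ^ 2 + X 1 ^ 2) + X 2 ^ 2) = 0 := by
  simp only [dotCurl, map_add, pderiv_mul, pderiv_pow, pderiv_C, pderiv_X_self,
    pderiv_X_of_ne, ne_eq, Fin.reduceEq, not_false_eq_true]
  ring

/-- The bivector `Λ₈ = b(x²+y²)∂₁∧∂₂ + (2b+c)xz∂₂∧∂₃ + (2b+c)yz∂₃∧∂₁ + z²∂₁∧∂₂`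
on ℝ³ is a Poisson bivector for all real `b, c` (taking the + sign for `z²`). -/
theorem stmt18 (b c : ℝ) (f g h : MvPolynomial (Fin 3) ℝ) :
    pbr (C (2*b+c) * (X 0 * X 2)) (C (2*b+c) * (X 1 * X 2))
        (C b * (X 0 ^ 2 + X 1 ^ 2) + X 2 ^ 2) f
      (pbr (C (2*b+c) * (X 0 * X 2)) (C (2*b+c) * (X 1 * X 2))
        (C b * (X 0 ^ 2 + X 1 ^ 2) + X 2 ^ 2) g h)
    + pbr (C (2*b+c) * (X 0 * X 2)) (C (2*b+c) * (X 1 * X 2))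
        (C b * (X 0 ^ 2 + X 1 ^ 2) + X 2 ^ 2) g
      (pbr (C (2*b+c) * (X 0 * X 2)) (C (2*b+c) * (X 1 * X 2))
        (C b * (X 0 ^ 2 + X 1 ^ 2) + X 2 ^ 2) h f)
    + pbr (C (2*b+c) * (X 0 * X 2)) (C (2*b+c) * (X 1 * X 2))
        (C b * (X 0 ^ 2 + X 1 ^ 2) + X 2 ^ 2) h
      (pbr (C (2*b+c) * (X 0 * X 2)) (C (2*b+c) * (X 1 * X 2))
        (C b * (X 0 ^ 2 + X 1 ^ 2) + X 2 ^ 2) f g)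
    = 0 :=
  pbr_jacobi_of_dotCurl_eq_zero (dotCurl_lambda8 b c) f g h
end
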